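/- Let n ≥ 1 and let X be a multi-sorted topological structure in the signature of M̃_n satisfying (A4) and (A5). Then X satisfies (A6) and (A7) if and only if X satisfies all four of the following conditions: (A6)⁰ ⟨X₀; ≤⁰, T₀⟩ is a Priestley space; (A6)′ ≤ᵏ is a partial order on X_k for all k ∈ {1,…,n}; (A6)″ the space X_k is compact for all k ∈ {1,…,n}; (A7)′ for all 1 ≤ j ≤ k ≤ n and all x ∈ X_j and y ∈ X_k with x ≰ʲᵏ y (where ≤ᵏᵏ := ≤ᵏ), there exist mutually increasing sets U_j,…,U_k with each U_ℓ a clopen up-set of ⟨X_ℓ; ≤ˡ, T_ℓ⟩, x ∈ U_j and y ∉ U_k. -/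

import Mathlib

/-!
STATEMENT 1: Let n ≥ 1 and let X be a multi-sorted topological structure in the
signature of M̃_n satisfying (A4) and (A5). Then X satisfies (A6) and (A7) if and
only if X satisfies all four of: (A6)⁰, (A6)′, (A6)″ and (A7)′.
-/

namespace ExpandingBelnap
/-! ### Multi-sorted topological structures in the signature of the alter ego `M̃ₙ`

A multi-sorted topological structure `X = ⟨X₀ ⊔ ⋯ ⊔ Xₙ; {g_k}, {≤ᵏ}, {≤ʲᵏ}, T⟩` is
presented by a single carrier `C` (the disjoint union), a `sort` map `C → Fin (n+1)`
(each sort being clopen, which encodes the disjoint-union topology), a combined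
operation `g : C → C` (equal to `g_k` on the sort-`k` part for `k ≥ 1` and to the
identity on the sort-`0` part), and a combined relation `r : C → C → Prop`
(equal to `≤ᵏ` on pairs within sort `k` and to `≤ʲᵏ` on pairs from sort `j` to
sort `k` for `1 ≤ j < k`, and empty on all other pairs of sorts). -/

/-- `U` is an up-set for the relation `r`. -/
def IsUpset {C : Type} (r : C → C → Prop) (U : Set C) : Prop :=
  ∀ x ∈ U, ∀ y, r x y → y ∈ U

/-- `⟨C; r, T⟩` is a Priestley space: `r` is a partial order and the space is
compact and totally order-disconnected. -/
def IsPriestley (C : Type) [TopologicalSpace C] (r : C → C → Prop) : Prop :=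
  (∀ x, r x x) ∧ (∀ x y, r x y → r y x → x = y) ∧
    (∀ x y z, r x y → r y z → r x z) ∧ CompactSpace C ∧
    ∀ x y, ¬ r x y → ∃ U : Set C, IsClopen U ∧ IsUpset r U ∧ x ∈ U ∧ y ∉ U

/-- `(C, sort, g, r)` presents a multi-sorted topological structure in the signature
of `M̃ₙ`: the sorts are clopen (disjoint-union topology), `g` maps into sort `0` and
restricts to the identity on sort `0`, and the relation only relates pairs within a
sort or from sort `j` to sort `k` where `1 ≤ j < k`. -/
def IsMS {n : ℕ} {C : Type} [TopologicalSpace C]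
    (sort : C → Fin (n + 1)) (g : C → C) (r : C → C → Prop) : Prop :=
  (∀ k, IsClopen {x | sort x = k}) ∧
    (∀ x, sort (g x) = 0) ∧
    (∀ x, sort x = 0 → g x = x) ∧
    (∀ x y, r x y → sort x = sort y ∨ (0 < (sort x).val ∧ (sort x).val < (sort y).val))

/-- (A1): each `g_k : X_k → X₀` is continuous (`k ∈ [1, n]`). -/
def AxA1 {n : ℕ} {C : Type} [TopologicalSpace C]
    (sort : C → Fin (n + 1)) (g : C → C) : Prop :=
  ∀ k : Fin (n + 1), 0 < k.val → Continuous fun x : {x : C // sort x = k} => g x.1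

/-- (A2): for `k ∈ [1, n]` and `x, y ∈ X_k`, `x ≤ᵏ y` implies `g_k x = g_k y`. -/
def AxA2 {n : ℕ} {C : Type}
    (sort : C → Fin (n + 1)) (g : C → C) (r : C → C → Prop) : Prop :=
  ∀ x y, sort x = sort y → 0 < (sort x).val → r x y → g x = g y

/-- (A3): for `1 ≤ j < k`, `x ∈ X_j`, `y ∈ X_k`, `x ≤ʲᵏ y` implies `g_j x = g_k y`. -/
def AxA3 {n : ℕ} {C : Type}
    (sort : C → Fin (n + 1)) (g : C → C) (r : C → C → Prop) : Prop :=
  ∀ x y, 0 < (sort x).val → (sort x).val < (sort y).val → r x y → g x = g y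

/-- (A4): for `1 ≤ j < k`, `x, y ∈ X_j`, `u, v ∈ X_k`:
`x ≤ʲ y`, `y ≤ʲᵏ u`, `u ≤ᵏ v` imply `x ≤ʲᵏ v`. -/
def AxA4 {n : ℕ} {C : Type} (sort : C → Fin (n + 1)) (r : C → C → Prop) : Prop :=
  ∀ x y u v, 0 < (sort x).val → sort x = sort y → (sort y).val < (sort u).val →
    sort u = sort v → r x y → r y u → r u v → r x v

/-- (A5): for `1 ≤ j < k < l`, `x ∈ X_j`, `y ∈ X_k`, `z ∈ X_l`:
`x ≤ʲᵏ y` and `y ≤ᵏˡ z` imply `x ≤ʲˡ z`. -/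
def AxA5 {n : ℕ} {C : Type} (sort : C → Fin (n + 1)) (r : C → C → Prop) : Prop :=
  ∀ x y z, 0 < (sort x).val → (sort x).val < (sort y).val →
    (sort y).val < (sort z).val → r x y → r y z → r x z

/-- (A6): each `⟨X_k; ≤ᵏ, T_k⟩` is a Priestley space (`k ∈ [0, n]`). -/
def AxA6 {n : ℕ} {C : Type} [TopologicalSpace C]
    (sort : C → Fin (n + 1)) (r : C → C → Prop) : Prop :=
  ∀ k : Fin (n + 1), IsPriestley {x : C // sort x = k} fun a b => r a.1 b.1

/-- `U j, …, U k` is a mutually increasing family: each `U l` is a subset of `X_l`,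
each `U l` is an up-set of `⟨X_l; ≤ˡ⟩`, and for `max(1,j) ≤ i ≤ l ≤ k`,
`x ∈ U i`, `y ∈ X_l` and `x ≤ⁱˡ y` imply `y ∈ U l`. -/
def MutInc {n : ℕ} {C : Type} (sort : C → Fin (n + 1)) (r : C → C → Prop)
    (j k : Fin (n + 1)) (U : Fin (n + 1) → Set C) : Prop :=
  (∀ l, j ≤ l → l ≤ k → U l ⊆ {x | sort x = l}) ∧
    ∀ i l, j ≤ i → i ≤ l → l ≤ k → (i = l ∨ 0 < i.val) →
      ∀ x ∈ U i, ∀ y, sort y = l → r x y → y ∈ U l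

/-- `U` is a clopen subset of the sort-`l` subspace `⟨X_l; T_l⟩`. -/
def ClopenSort {n : ℕ} {C : Type} [TopologicalSpace C]
    (sort : C → Fin (n + 1)) (l : Fin (n + 1)) (U : Set C) : Prop :=
  IsClopen {z : {x : C // sort x = l} | z.1 ∈ U}

/-- (A7): for `1 ≤ j < k`, `x ∈ X_j`, `y ∈ X_k` with `x ≰ʲᵏ y`, there is a mutually
increasing family of clopen up-sets `U j, …, U k` with `x ∈ U j` and `y ∉ U k`. -/
def AxA7 {n : ℕ} {C : Type} [TopologicalSpace C]
    (sort : C → Fin (n + 1)) (r : C → C → Prop) : Prop :=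
  ∀ j k : Fin (n + 1), 0 < j.val → j < k → ∀ x y, sort x = j → sort y = k → ¬ r x y →
    ∃ U : Fin (n + 1) → Set C, MutInc sort r j k U ∧
      (∀ l, j ≤ l → l ≤ k → ClopenSort sort l (U l)) ∧ x ∈ U j ∧ y ∉ U k

/-- The conjunction of axioms (A1)–(A7). -/
def AxiomsA {n : ℕ} {C : Type} [TopologicalSpace C]
    (sort : C → Fin (n + 1)) (g : C → C) (r : C → C → Prop) : Prop :=
  AxA1 sort g ∧ AxA2 sort g r ∧ AxA3 sort g r ∧ AxA4 sort r ∧ AxA5 sort r ∧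
    AxA6 sort r ∧ AxA7 sort r

/-- (A6)⁰: `⟨X₀; ≤⁰, T₀⟩` is a Priestley space. -/
def AxA6zero {n : ℕ} {C : Type} [TopologicalSpace C]
    (sort : C → Fin (n + 1)) (r : C → C → Prop) : Prop :=
  IsPriestley {x : C // sort x = 0} fun a b => r a.1 b.1

/-- (A6)′: `≤ᵏ` is a partial order on `X_k`, for all `k ∈ [1, n]`. -/
def AxA6ord {n : ℕ} {C : Type} (sort : C → Fin (n + 1)) (r : C → C → Prop) : Prop :=
  ∀ k : Fin (n + 1), 0 < k.val →
    (∀ x, sort x = k → r x x) ∧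
      (∀ x y, sort x = k → sort y = k → r x y → r y x → x = y) ∧
      (∀ x y z, sort x = k → sort y = k → sort z = k → r x y → r y z → r x z)

/-- (A6)″: the space `⟨X_k; T_k⟩` is compact, for all `k ∈ [1, n]`. -/
def AxA6cpt {n : ℕ} {C : Type} [TopologicalSpace C]
    (sort : C → Fin (n + 1)) : Prop :=
  ∀ k : Fin (n + 1), 0 < k.val → CompactSpace {x : C // sort x = k}

/-- (A7)′: like (A7) but for all `1 ≤ j ≤ k ≤ n` (where `≤ᵏᵏ := ≤ᵏ`). -/
def AxA7' {n : ℕ} {C : Type} [TopologicalSpace C]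
    (sort : C → Fin (n + 1)) (r : C → C → Prop) : Prop :=
  ∀ j k : Fin (n + 1), 0 < j.val → j ≤ k → ∀ x y, sort x = j → sort y = k → ¬ r x y →
    ∃ U : Fin (n + 1) → Set C, MutInc sort r j k U ∧
      (∀ l, j ≤ l → l ≤ k → ClopenSort sort l (U l)) ∧ x ∈ U j ∧ y ∉ U k

/-! For `j = k` a mutually increasing family is just a clopen up-set of `X_k`, so the
diagonal case of (A7)′ is total order-disconnectedness of `X_k`; (A6) for `k ≥ 1` thus
splits into (A6)′, (A6)″ and that diagonal case. -/
section Separation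

variable {n : ℕ} {C : Type} [TopologicalSpace C] (sort : C → Fin (n + 1)) (r : C → C → Prop)

def MutIncSeparates (j k : Fin (n + 1)) (x y : C) : Prop :=
  ∃ U : Fin (n + 1) → Set C, MutInc sort r j k U ∧
    (∀ l, j ≤ l → l ≤ k → ClopenSort sort l (U l)) ∧ x ∈ U j ∧ y ∉ U k

theorem mutIncSeparates_self_iff {k : Fin (n + 1)} {x y : C} (hx : sort x = k)
    (hy : sort y = k) :
    MutIncSeparates sort r k k x y ↔
      ∃ W : Set {x : C // sort x = k}, IsClopen W ∧ IsUpset (fun a b => r a.1 b.1) W ∧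
        ⟨x, hx⟩ ∈ W ∧ ⟨y, hy⟩ ∉ W := by
  constructor
  · rintro ⟨U, ⟨-, hUinc⟩, hUcl, hxU, hyU⟩
    exact ⟨{z | z.1 ∈ U k}, hUcl k le_rfl le_rfl,
      fun a ha b hab => hUinc k k le_rfl le_rfl le_rfl (Or.inl rfl) a.1 ha b.1 b.2 hab,
      hxU, hyU⟩
  · rintro ⟨W, hWcl, hWup, hxW, hyW⟩
    -- only the index `k` matters, so a constant family will do
    refine ⟨fun _ => Subtype.val '' W, ⟨?_, ?_⟩, fun l hkl hlk => ?_, ⟨_, hxW, rfl⟩, ?_⟩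
    · rintro l hkl hlk _ ⟨w, -, rfl⟩
      exact w.2.trans (le_antisymm hkl hlk)
    · rintro i l hki hil hlk - _ ⟨w, hw, rfl⟩ b hb hwb
      obtain rfl : k = l := le_antisymm (hki.trans hil) hlk
      exact ⟨⟨b, hb⟩, hWup w hw ⟨b, hb⟩ hwb, rfl⟩
    · obtain rfl : k = l := le_antisymm hkl hlk
      change IsClopen (Subtype.val ⁻¹' (Subtype.val '' W))
      rwa [Set.preimage_image_eq W Subtype.val_injective]
    · rintro ⟨w, hw, hwy⟩
      obtain rfl : w = ⟨y, hy⟩ := Subtype.ext hwy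
      exact hyW hw

theorem isPriestley_sort_iff (k : Fin (n + 1)) :
    IsPriestley {x : C // sort x = k} (fun a b => r a.1 b.1) ↔
      ((∀ x, sort x = k → r x x) ∧
        (∀ x y, sort x = k → sort y = k → r x y → r y x → x = y) ∧
        (∀ x y z, sort x = k → sort y = k → sort z = k → r x y → r y z → r x z)) ∧
      CompactSpace {x : C // sort x = k} ∧
      ∀ x y, sort x = k → sort y = k → ¬ r x y → MutIncSeparates sort r k k x y := by
  constructor
  · rintro ⟨hrefl, hanti, htrans, hcpt, hsep⟩
    exact ⟨⟨fun x hx => hrefl ⟨x, hx⟩,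
      fun x y hx hy hxy hyx => congrArg Subtype.val (hanti ⟨x, hx⟩ ⟨y, hy⟩ hxy hyx),
      fun x y z hx hy hz => htrans ⟨x, hx⟩ ⟨y, hy⟩ ⟨z, hz⟩⟩,
      hcpt, fun x y hx hy hxy => (mutIncSeparates_self_iff sort r hx hy).2 (hsep _ _ hxy)⟩
  · rintro ⟨⟨hrefl, hanti, htrans⟩, hcpt, hsep⟩
    exact ⟨fun x => hrefl x.1 x.2,
      fun x y hxy hyx => Subtype.ext (hanti x.1 y.1 x.2 y.2 hxy hyx),
      fun x y z => htrans x.1 y.1 z.1 x.2 y.2 z.2, hcpt,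
      fun x y hxy => (mutIncSeparates_self_iff sort r x.2 y.2).1 (hsep x.1 y.1 x.2 y.2 hxy)⟩

end Separation

theorem statement1_general (n : ℕ) (C : Type) [TopologicalSpace C]
    (sort : C → Fin (n + 1)) (r : C → C → Prop) :
    (AxA6 sort r ∧ AxA7 sort r) ↔
      (AxA6zero sort r ∧ AxA6ord sort r ∧ AxA6cpt sort ∧ AxA7' sort r) := by
  constructor
  · rintro ⟨h6, h7⟩
    have hsplit := fun k => (isPriestley_sort_iff sort r k).1 (h6 k)
    refine ⟨h6 0, fun k _ => (hsplit k).1, fun k _ => (hsplit k).2.1, ?_⟩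
    intro j k hj hjk x y hx hy hxy
    rcases hjk.lt_or_eq with hlt | rfl
    · exact h7 j k hj hlt x y hx hy hxy
    · exact (hsplit j).2.2 x y hx hy hxy
  · rintro ⟨h60, h6o, h6c, h7'⟩
    refine ⟨fun k => ?_, fun j k hj hjk => h7' j k hj hjk.le⟩
    rcases Nat.eq_zero_or_pos k.val with hk | hk
    · rwa [show k = 0 from Fin.ext hk]
    · exact (isPriestley_sort_iff sort r k).2
        ⟨h6o k hk, h6c k hk, fun x y hx hy => h7' k k hk le_rfl x y hx hy⟩

theorem statement1 (n : ℕ) (hn : 1 ≤ n) (C : Type) [TopologicalSpace C]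
    (sort : C → Fin (n + 1)) (g : C → C) (r : C → C → Prop)
    (hMS : IsMS sort g r) (h4 : AxA4 sort r) (h5 : AxA5 sort r) :
    (AxA6 sort r ∧ AxA7 sort r) ↔
      (AxA6zero sort r ∧ AxA6ord sort r ∧ AxA6cpt sort ∧ AxA7' sort r) :=
  statement1_general n C sort r

end ExpandingBelnap
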